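/- There exists a constant C > 0 such that the following holds for all μ > 0, k ∈ ℤ∖{0} and λ ∈ ℝ. Let Θ : [−1,1] → ℂ be twice continuously differentiable with Θ(−1) = Θ(1) = 0, and F ∈ L²(−1,1), satisfying the resolvent equation −μ(Θ''(y) − k²Θ(y)) + ik(y−λ)Θ(y) = F(y) for all y ∈ (−1,1). Then μ^{2/3}|k|^{1/3} ‖Θ'‖_{L²(−1,1)} + (μk²)^{1/3} ‖Θ‖_{L²(−1,1)} + |k| ‖(y−λ)Θ‖_{L²(−1,1)} ≤ C ‖F‖_{L²(−1,1)}. -/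

import Mathlib

/-!
Pairing the equation with `conj Θ` and taking real parts gives `μ ‖Θ'‖² ≤ ‖F‖ ‖Θ‖`; pairing it
with `(y - λ) conj Θ` and taking imaginary parts gives
`|k| ‖(y - λ) Θ‖² ≤ ‖F‖ ‖(y - λ) Θ‖ + μ ‖Θ'‖ ‖Θ‖`, the commutator `[∂_y, y - λ] = 1` producing the
last term. Since `Θ(-1) = 0`, `‖Θ‖²_∞ ≤ 2 ‖Θ'‖ ‖Θ‖`, and splitting `(-1, 1)` into the points within
`δ` of `λ` and the rest gives `‖Θ‖² ≤ 4 δ ‖Θ'‖ ‖Θ‖ + δ⁻² ‖(y - λ) Θ‖²`. For `δ = (μ / |k|)^(1/3)`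
the three terms of the estimate then satisfy a closed system of quadratic inequalities with
coefficient `‖F‖`, which bounds each of them by a multiple of `‖F‖`.
-/

open MeasureTheory Set Real

noncomputable section

/-- The `L²` norm on `(-1,1)` of a complex valued function. -/
def L2y (g : ℝ → ℂ) : ℝ := (∫ y in (-1:ℝ)..1, ‖g y‖ ^ 2) ^ ((1:ℝ)/2)

open scoped ComplexConjugate

def resolventOp (μ k lam : ℝ) (Θ : ℝ → ℂ) (y : ℝ) : ℂ :=
  -(μ : ℂ) * (deriv (deriv Θ) y - (k : ℂ) ^ 2 * Θ y) + Complex.I * k * ((y : ℂ) - lam) * Θ y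

lemma continuous_resolventOp {μ k lam : ℝ} {Θ : ℝ → ℂ} (hΘ : ContDiff ℝ 2 Θ) :
    Continuous (resolventOp μ k lam Θ) := by
  have hc₀ := hΘ.continuous
  have hc₂ := hΘ.deriv'.continuous_deriv (le_refl 1)
  unfold resolventOp
  fun_prop

lemma integral_norm_sq_nonneg (g : ℝ → ℂ) : 0 ≤ ∫ y in (-1:ℝ)..1, ‖g y‖ ^ 2 :=
  intervalIntegral.integral_nonneg (by norm_num) fun _ _ => sq_nonneg _

lemma L2y_nonneg (g : ℝ → ℂ) : 0 ≤ L2y g := rpow_nonneg (integral_norm_sq_nonneg g) _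

lemma L2y_sq (g : ℝ → ℂ) : L2y g ^ 2 = ∫ y in (-1:ℝ)..1, ‖g y‖ ^ 2 := by
  rw [L2y, ← rpow_natCast, ← rpow_mul (integral_norm_sq_nonneg g)]
  norm_num

lemma L2y_congr {f g : ℝ → ℂ} (h : EqOn f g (Ioo (-1) 1)) : L2y f = L2y g := by
  simp only [L2y, intervalIntegral.integral_of_le (by norm_num : (-1:ℝ) ≤ 1),
    integral_Ioc_eq_integral_Ioo]
  rw [setIntegral_congr_fun measurableSet_Ioo fun y hy => by rw [h hy]]

lemma integral_mul_conj_self (f : ℝ → ℂ) :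
    ∫ y in (-1:ℝ)..1, f y * conj (f y) = ((L2y f ^ 2 : ℝ) : ℂ) := by
  simp only [RCLike.mul_conj, L2y_sq, ← intervalIntegral.integral_ofReal]
  norm_cast

lemma integral_norm_mul_norm_le_L2y {f g : ℝ → ℂ} (hf : Continuous f) (hg : Continuous g) :
    ∫ y in (-1:ℝ)..1, ‖f y‖ * ‖g y‖ ≤ L2y f * L2y g := by
  have memLp : ∀ h : ℝ → ℂ, Continuous h →
      MemLp h (ENNReal.ofReal 2) (volume.restrict (Ioc (-1:ℝ) 1)) := fun h hh => by
    obtain ⟨C, hC⟩ := (isCompact_Icc (a := (-1:ℝ)) (b := 1)).exists_bound_of_continuousOn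
      hh.continuousOn
    refine MemLp.of_bound hh.aestronglyMeasurable C ?_
    exact (ae_restrict_iff' measurableSet_Ioc).2
      (.of_forall fun y hy => hC y (Ioc_subset_Icc_self hy))
  have := integral_mul_norm_le_Lp_mul_Lq Real.HolderConjugate.two_two (memLp f hf) (memLp g hg)
  simpa [L2y, intervalIntegral.integral_of_le, Real.rpow_two] using this

lemma norm_integral_mul_conj_le_L2y {f g : ℝ → ℂ} (hf : Continuous f) (hg : Continuous g) :
    ‖∫ y in (-1:ℝ)..1, f y * conj (g y)‖ ≤ L2y f * L2y g :=
  (intervalIntegral.norm_integral_le_integral_norm (by norm_num)).trans <| by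
    simpa only [norm_mul, RCLike.norm_conj] using integral_norm_mul_norm_le_L2y hf hg

lemma im_intervalIntegral_eq_zero {f : ℝ → ℂ} {a b : ℝ} (hf : ∀ y, (f y).im = 0) :
    (∫ y in a..b, f y).im = 0 := by
  have : f = fun y => ((f y).re : ℂ) := funext fun y => Complex.ext rfl (by simp [hf])
  rw [this, intervalIntegral.integral_ofReal, Complex.ofReal_im]

theorem integral_deriv_deriv_mul_conj {u w : ℝ → ℂ} {a b : ℝ} (hu : ContDiff ℝ 2 u)
    (hw : ContDiff ℝ 1 w) (ha : w a = 0) (hb : w b = 0) :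
    ∫ y in a..b, deriv (deriv u) y * conj (w y) = -∫ y in a..b, deriv u y * conj (deriv w y) := by
  have hu' : ContDiff ℝ 1 (deriv u) := hu.deriv'
  have hc₁ := hu.continuous_deriv one_le_two
  have hc₂ := hu'.continuous_deriv le_rfl
  have hc₃ := hw.continuous
  have hc₄ := hw.continuous_deriv le_rfl
  have h := intervalIntegral.integral_deriv_mul_eq_sub (a := a) (b := b) (u := deriv u)
    (v := fun y => conj (w y)) (v' := fun y => conj (deriv w y))
    (fun x _ => (hu'.differentiable one_ne_zero x).hasDerivAt)
    (fun x _ => (hw.differentiable one_ne_zero x).hasDerivAt.star)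
    (hc₂.intervalIntegrable _ _) ((continuous_star.comp hc₄).intervalIntegrable _ _)
  rw [intervalIntegral.integral_add ((by fun_prop : Continuous _).intervalIntegrable _ _)
    ((by fun_prop : Continuous _).intervalIntegrable _ _), ha, hb] at h
  simp only [map_zero, mul_zero, sub_zero] at h
  linear_combination h

theorem integral_resolventOp_mul_conj {μ k lam a b : ℝ} {Θ w : ℝ → ℂ} (hΘ : ContDiff ℝ 2 Θ)
    (hw : ContDiff ℝ 1 w) (ha : w a = 0) (hb : w b = 0) :
    ∫ y in a..b, resolventOp μ k lam Θ y * conj (w y) =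
      μ * (∫ y in a..b, deriv Θ y * conj (deriv w y))
        + μ * k ^ 2 * (∫ y in a..b, Θ y * conj (w y))
        + Complex.I * k * ∫ y in a..b, ((y : ℂ) - lam) * Θ y * conj (w y) := by
  have hc₀ := hΘ.continuous
  have hc₂ := hΘ.deriv'.continuous_deriv (le_refl 1)
  have hc := hw.continuous
  have hint : ∀ f : ℝ → ℂ, Continuous f → IntervalIntegrable f volume a b :=
    fun f hf => hf.intervalIntegrable a b
  rw [neg_eq_iff_eq_neg.mp (integral_deriv_deriv_mul_conj hΘ hw ha hb).symm, mul_neg]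
  simp only [← intervalIntegral.integral_const_mul, ← intervalIntegral.integral_neg]
  rw [← intervalIntegral.integral_add (hint _ (by fun_prop)) (hint _ (by fun_prop)),
    ← intervalIntegral.integral_add (hint _ (by fun_prop)) (hint _ (by fun_prop))]
  congr 1 with y
  simp only [resolventOp]
  ring

lemma im_ofReal_mul_mul_conj_self (r : ℝ) (z : ℂ) : ((r : ℂ) * z * conj z).im = 0 := by
  rw [mul_assoc, Complex.mul_conj, ← Complex.ofReal_mul, Complex.ofReal_im]

theorem mul_L2y_deriv_sq_le {μ k lam : ℝ} {Θ : ℝ → ℂ} (hμ : 0 ≤ μ) (hΘ : ContDiff ℝ 2 Θ)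
    (h₁ : Θ (-1) = 0) (h₂ : Θ 1 = 0) :
    μ * L2y (deriv Θ) ^ 2 ≤ L2y (resolventOp μ k lam Θ) * L2y Θ := by
  have hweight : (∫ y in (-1:ℝ)..1, ((y : ℂ) - lam) * Θ y * conj (Θ y)).im = 0 :=
    im_intervalIntegral_eq_zero fun y => by
      simpa using im_ofReal_mul_mul_conj_self (y - lam) (Θ y)
  have hre : (∫ y in (-1:ℝ)..1, resolventOp μ k lam Θ y * conj (Θ y)).re
      = μ * L2y (deriv Θ) ^ 2 + μ * k ^ 2 * L2y Θ ^ 2 := by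
    rw [integral_resolventOp_mul_conj hΘ (hΘ.of_le one_le_two) h₁ h₂, integral_mul_conj_self,
      integral_mul_conj_self]
    simp [Complex.mul_re, hweight, ← Complex.ofReal_pow]
  calc μ * L2y (deriv Θ) ^ 2 ≤ μ * L2y (deriv Θ) ^ 2 + μ * k ^ 2 * L2y Θ ^ 2 := by
        have := mul_nonneg (mul_nonneg hμ (sq_nonneg k)) (sq_nonneg (L2y Θ))
        linarith
    _ ≤ ‖∫ y in (-1:ℝ)..1, resolventOp μ k lam Θ y * conj (Θ y)‖ := hre ▸ Complex.re_le_norm _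
    _ ≤ L2y (resolventOp μ k lam Θ) * L2y Θ :=
        norm_integral_mul_conj_le_L2y (continuous_resolventOp hΘ) hΘ.continuous

theorem abs_mul_L2y_weight_sq_le {μ k lam : ℝ} {Θ : ℝ → ℂ} (hμ : 0 ≤ μ) (hΘ : ContDiff ℝ 2 Θ)
    (h₁ : Θ (-1) = 0) (h₂ : Θ 1 = 0) :
    |k| * L2y (fun y => ((y : ℂ) - lam) * Θ y) ^ 2
      ≤ L2y (resolventOp μ k lam Θ) * L2y (fun y => ((y : ℂ) - lam) * Θ y)
        + μ * (L2y (deriv Θ) * L2y Θ) := by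
  set w : ℝ → ℂ := fun y => ((y : ℂ) - lam) * Θ y
  have hc₀ := hΘ.continuous
  have hc₁ := hΘ.continuous_deriv one_le_two
  have hw : ContDiff ℝ 1 w :=
    (Complex.ofRealCLM.contDiff.sub contDiff_const).mul (hΘ.of_le one_le_two)
  have hderiv : deriv w = fun y => Θ y + ((y : ℂ) - lam) * deriv Θ y := by
    funext y
    have := ((Complex.ofRealCLM.hasDerivAt (x := y)).sub_const (lam : ℂ)).fun_mul
      (hΘ.differentiable two_ne_zero y).hasDerivAt
    simpa using this.deriv
  have hreal₁ : (∫ y in (-1:ℝ)..1, Θ y * conj (w y)).im = 0 :=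
    im_intervalIntegral_eq_zero fun y => by
      rw [show Θ y * conj (w y) = ((y - lam : ℝ) : ℂ) * Θ y * conj (Θ y) by simp [w]; ring]
      exact im_ofReal_mul_mul_conj_self _ _
  have hreal₂ : (∫ y in (-1:ℝ)..1, deriv Θ y * conj (deriv w y)).im
      = (∫ y in (-1:ℝ)..1, deriv Θ y * conj (Θ y)).im := by
    have hsplit : ∀ y, deriv Θ y * conj (deriv w y)
        = deriv Θ y * conj (Θ y) + ((y - lam : ℝ) : ℂ) * deriv Θ y * conj (deriv Θ y) := by
      intro y
      simp only [hderiv, map_add, map_mul, map_sub, Complex.conj_ofReal, Complex.ofReal_sub]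
      ring
    simp_rw [hsplit]
    rw [intervalIntegral.integral_add ((by fun_prop : Continuous _).intervalIntegrable _ _)
      ((by fun_prop : Continuous _).intervalIntegrable _ _), Complex.add_im,
      im_intervalIntegral_eq_zero fun y => im_ofReal_mul_mul_conj_self _ _, add_zero]
  have him : (∫ y in (-1:ℝ)..1, resolventOp μ k lam Θ y * conj (w y)).im
      = μ * (∫ y in (-1:ℝ)..1, deriv Θ y * conj (Θ y)).im + k * L2y w ^ 2 := by
    rw [integral_resolventOp_mul_conj hΘ hw (by simp [w, h₁]) (by simp [w, h₂]),
      integral_mul_conj_self w]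
    simp [Complex.mul_im, hreal₁, hreal₂, ← Complex.ofReal_pow]
  have hG := norm_integral_mul_conj_le_L2y (continuous_resolventOp (μ := μ) (k := k) (lam := lam) hΘ)
    hw.continuous
  have hJ := norm_integral_mul_conj_le_L2y hc₁ hc₀
  calc |k| * L2y w ^ 2 = |(∫ y in (-1:ℝ)..1, resolventOp μ k lam Θ y * conj (w y)).im
        - μ * (∫ y in (-1:ℝ)..1, deriv Θ y * conj (Θ y)).im| := by
        rw [him, add_sub_cancel_left, abs_mul, abs_of_nonneg (sq_nonneg (L2y w))]
    _ ≤ L2y (resolventOp μ k lam Θ) * L2y w + μ * (L2y (deriv Θ) * L2y Θ) := by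
        refine (abs_sub _ _).trans (add_le_add ((Complex.abs_im_le_norm _).trans hG) ?_)
        rw [abs_mul, abs_of_nonneg hμ]
        exact mul_le_mul_of_nonneg_left ((Complex.abs_im_le_norm _).trans hJ) hμ

theorem norm_sq_le_two_mul_L2y_deriv_mul_L2y {Θ : ℝ → ℂ} (hΘ : ContDiff ℝ 1 Θ)
    (h₁ : Θ (-1) = 0) {y : ℝ} (hy : y ∈ Icc (-1:ℝ) 1) :
    ‖Θ y‖ ^ 2 ≤ 2 * (L2y (deriv Θ) * L2y Θ) := by
  have hc₀ := hΘ.continuous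
  have hc₁ := hΘ.continuous_deriv le_rfl
  have hd : ∀ t, HasDerivAt (fun t => ‖Θ t‖ ^ 2) (2 * inner ℝ (Θ t) (deriv Θ t)) t :=
    fun t => (hΘ.differentiable one_ne_zero t).hasDerivAt.norm_sq
  calc ‖Θ y‖ ^ 2 = ∫ t in (-1:ℝ)..y, 2 * inner ℝ (Θ t) (deriv Θ t) := by
        rw [intervalIntegral.integral_eq_sub_of_hasDerivAt (fun t _ => hd t)
          ((by fun_prop : Continuous _).intervalIntegrable _ _), h₁, norm_zero]
        ring
    _ ≤ ∫ t in (-1:ℝ)..y, 2 * (‖deriv Θ t‖ * ‖Θ t‖) := by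
        refine intervalIntegral.integral_mono_on hy.1
          ((by fun_prop : Continuous _).intervalIntegrable _ _)
          ((by fun_prop : Continuous _).intervalIntegrable _ _) fun t _ => ?_
        linarith [real_inner_le_norm (Θ t) (deriv Θ t), mul_comm ‖Θ t‖ ‖deriv Θ t‖]
    _ ≤ ∫ t in (-1:ℝ)..1, 2 * (‖deriv Θ t‖ * ‖Θ t‖) :=
        intervalIntegral.integral_mono_interval le_rfl hy.1 hy.2
          (.of_forall fun t => by positivity) ((by fun_prop : Continuous _).intervalIntegrable _ _)
    _ ≤ 2 * (L2y (deriv Θ) * L2y Θ) := by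
        rw [intervalIntegral.integral_const_mul]
        gcongr
        exact integral_norm_mul_norm_le_L2y hc₁ hc₀

theorem L2y_sq_le_of_norm_sq_le {Θ : ℝ → ℂ} (hΘ : Continuous Θ) (lam : ℝ) {S δ : ℝ} (hδ : 0 < δ)
    (hS : ∀ y ∈ Icc (-1:ℝ) 1, ‖Θ y‖ ^ 2 ≤ S) :
    L2y Θ ^ 2 ≤ 2 * δ * S + L2y (fun y => ((y : ℂ) - lam) * Θ y) ^ 2 / δ ^ 2 := by
  set I := Ioo (lam - δ) (lam + δ)
  have hS₀ : 0 ≤ S := (sq_nonneg _).trans (hS 0 (by norm_num))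
  have hpt : ∀ t ∈ Icc (-1:ℝ) 1,
      ‖Θ t‖ ^ 2 ≤ I.indicator (fun _ => S) t + ‖((t : ℂ) - lam) * Θ t‖ ^ 2 / δ ^ 2 := by
    intro t ht
    have hnorm : ‖((t : ℂ) - lam) * Θ t‖ = |t - lam| * ‖Θ t‖ := by
      rw [norm_mul, ← Complex.ofReal_sub, Complex.norm_real, Real.norm_eq_abs]
    by_cases htI : t ∈ I
    · rw [indicator_of_mem htI]
      have := hS t ht
      have : 0 ≤ ‖((t : ℂ) - lam) * Θ t‖ ^ 2 / δ ^ 2 := by positivity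
      linarith
    · rw [indicator_of_notMem htI, zero_add, le_div_iff₀ (by positivity), hnorm, mul_pow, sq_abs]
      have : δ ^ 2 ≤ (t - lam) ^ 2 := by
        simp only [I, mem_Ioo, not_and_or, not_lt] at htI
        rcases htI with h | h <;> nlinarith
      rw [mul_comm]
      exact mul_le_mul_of_nonneg_right this (sq_nonneg _)
  have hind : ∫ t in (-1:ℝ)..1, I.indicator (fun _ => S) t ≤ 2 * δ * S := by
    rw [intervalIntegral.integral_of_le (by norm_num), setIntegral_indicator measurableSet_Ioo,
      setIntegral_const, smul_eq_mul]
    refine mul_le_mul_of_nonneg_right ?_ hS₀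
    calc volume.real (Ioc (-1) 1 ∩ I) ≤ volume.real I := measureReal_mono inter_subset_right
          measure_Ioo_lt_top.ne
      _ = 2 * δ := by rw [Real.volume_real_Ioo_of_le (by linarith)]; ring
  have hint₁ : IntervalIntegrable (I.indicator fun _ => S) volume (-1) 1 :=
    (integrable_indicator_iff measurableSet_Ioo).2
      (integrableOn_const measure_Ioo_lt_top.ne) |>.intervalIntegrable
  have hint₂ :
      IntervalIntegrable (fun t : ℝ => ‖((t : ℂ) - lam) * Θ t‖ ^ 2 / δ ^ 2) volume (-1) 1 :=
    (by fun_prop : Continuous _).intervalIntegrable _ _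
  have hmono := intervalIntegral.integral_mono_on (by norm_num)
    ((by fun_prop : Continuous _).intervalIntegrable _ _) (hint₁.add hint₂) hpt
  rw [intervalIntegral.integral_add hint₁ hint₂, intervalIntegral.integral_div] at hmono
  rw [L2y_sq, L2y_sq]
  linarith

theorem add_add_le_of_coupled_sq_le {E P Q R : ℝ} (hE : 0 ≤ E) (hP : 0 ≤ P)
    (hQ₂ : Q ^ 2 ≤ E * P) (hR₂ : R ^ 2 ≤ E * R + Q * P)
    (hP₂ : P ^ 2 ≤ 4 * (Q * P) + R ^ 2) :
    Q + P + R ≤ 100 * E := by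
  have hR' : R ^ 2 ≤ E ^ 2 + 2 * (Q * P) := by nlinarith [sq_nonneg (R - E)]
  have hP' : P ^ 2 ≤ 6 * (Q * P) + E ^ 2 := by nlinarith
  have hPE : P ≤ 49 * E := by
    nlinarith [sq_nonneg (P - 12 * Q), sq_nonneg (P - 49 * E), sq_nonneg (P - 24 * E)]
  have hQE : Q ≤ 7 * E := by nlinarith
  have hRE : R ≤ 30 * E := by nlinarith
  linarith

lemma pow_three_rpow {x : ℝ} (hx : 0 ≤ x) (r : ℝ) : (x ^ 3) ^ r = x ^ (3 * r) := by
  rw [← rpow_natCast, ← rpow_mul hx, Nat.cast_ofNat]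

theorem rpow_weighted_sum_le {μ K A B M E : ℝ} (hμ : 0 < μ) (hK : 0 < K) (hB : 0 ≤ B)
    (hE : 0 ≤ E) (h₁ : μ * A ^ 2 ≤ E * B)
    (h₂ : K * M ^ 2 ≤ E * M + μ * (A * B))
    (h₃ : ∀ δ > 0, B ^ 2 ≤ 2 * δ * (2 * (A * B)) + M ^ 2 / δ ^ 2) :
    μ ^ ((2:ℝ)/3) * K ^ ((1:ℝ)/3) * A + (μ * K ^ 2) ^ ((1:ℝ)/3) * B + K * M ≤ 100 * E := by
  obtain ⟨a, ha, rfl⟩ : ∃ a > 0, a ^ 3 = μ :=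
    ⟨μ ^ (3⁻¹ : ℝ), by positivity, rpow_inv_natCast_pow hμ.le three_ne_zero⟩
  obtain ⟨κ, hκ, rfl⟩ : ∃ κ > 0, κ ^ 3 = K :=
    ⟨K ^ (3⁻¹ : ℝ), by positivity, rpow_inv_natCast_pow hK.le three_ne_zero⟩
  have hrw : (a ^ 3) ^ ((2:ℝ)/3) * (κ ^ 3) ^ ((1:ℝ)/3) * A
      + (a ^ 3 * (κ ^ 3) ^ 2) ^ ((1:ℝ)/3) * B = a ^ 2 * κ * A + a * κ ^ 2 * B := by
    rw [show a ^ 3 * (κ ^ 3) ^ 2 = (a * κ ^ 2) ^ 3 by ring, pow_three_rpow ha.le,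
      pow_three_rpow hκ.le, pow_three_rpow (by positivity)]
    norm_num
  rw [hrw]
  refine add_add_le_of_coupled_sq_le hE (by positivity) ?_ ?_ ?_
  · linear_combination (a * κ ^ 2) * h₁
  · linear_combination κ ^ 3 * h₂
  · have h := h₃ (a / κ) (by positivity)
    field_simp at h
    linear_combination κ ^ 3 * h

/-- Sharp `L²` resolvent estimate for the linearized operator
`−μ(∂_y² − k²) + ik(y − λ)` in the channel `(-1,1)` with Dirichlet boundary
conditions, for real spectral parameter `λ`. -/
theorem statement5 :
    ∃ C > (0:ℝ), ∀ (μ : ℝ) (k : ℤ) (lam : ℝ), 0 < μ → k ≠ 0 →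
    ∀ (Θ F : ℝ → ℂ),
      ContDiff ℝ 2 Θ →
      Θ (-1) = 0 → Θ 1 = 0 →
      IntegrableOn (fun y => ‖F y‖ ^ 2) (Ioo (-1:ℝ) 1) →
      (∀ y ∈ Ioo (-1:ℝ) 1,
        -(μ : ℂ) * (deriv (deriv Θ) y - (k:ℂ)^2 * Θ y)
          + Complex.I * (k:ℂ) * ((y:ℂ) - (lam:ℂ)) * Θ y = F y) →
      μ ^ ((2:ℝ)/3) * |(k:ℝ)| ^ ((1:ℝ)/3) * L2y (deriv Θ)
        + (μ * (k:ℝ)^2) ^ ((1:ℝ)/3) * L2y Θ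
        + |(k:ℝ)| * L2y (fun y => ((y:ℂ) - (lam:ℂ)) * Θ y)
      ≤ C * L2y F := by
  refine ⟨100, by norm_num, fun μ k lam hμ hk Θ F hΘ hΘ₁ hΘ₂ _ hF => ?_⟩
  have hFG : L2y F = L2y (resolventOp μ k lam Θ) :=
    L2y_congr fun y hy => by rw [← hF y hy, resolventOp]; push_cast; rfl
  have hK : 0 < |(k:ℝ)| := abs_pos.2 (Int.cast_ne_zero.2 hk)
  rw [hFG, ← sq_abs (k:ℝ)]
  refine rpow_weighted_sum_le hμ hK (L2y_nonneg _) (L2y_nonneg _)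
    (mul_L2y_deriv_sq_le hμ.le hΘ hΘ₁ hΘ₂) (abs_mul_L2y_weight_sq_le hμ.le hΘ hΘ₁ hΘ₂)
    fun δ hδ => L2y_sq_le_of_norm_sq_le hΘ.continuous lam hδ fun y hy =>
      norm_sq_le_two_mul_L2y_deriv_mul_L2y (hΘ.of_le one_le_two) hΘ₁ hy
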